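/- arXiv:2412.18717 — 2 statements merged into one kernel-verified Lean document; each statement's English description precedes it below -/
import Mathlib

section
/- Let ι be a finite index set, θ₁ > 0 and θ₂ > 0, and let x, l : ι → ℝ be given. The function F(s) = (θ₁/2)·Σ_{i∈ι} (x i − l i − s i)² + θ₂·Σ_{i∈ι} |s i| over s : ι → ℝ attains its minimum at the unique point s* defined componentwise by s* i = sign(x i − l i)·max(|x i − l i| − θ₂/θ₁, 0); that is, F(s*) ≤ F(s) for all s : ι → ℝ. -/
lemma soft_threshold_scalar (θ₁ θ₂ b s : ℝ) (hθ₁ : 0 < θ₁) (hθ₂ : 0 < θ₂) :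
    θ₁ / 2 * (b - Real.sign b * max (|b| - θ₂ / θ₁) 0) ^ 2
      + θ₂ * |Real.sign b * max (|b| - θ₂ / θ₁) 0|
    ≤ θ₁ / 2 * (b - s) ^ 2 + θ₂ * |s| := by
  set β := θ₂ / θ₁ with hβdef
  have hβ : 0 < β := div_pos hθ₂ hθ₁
  have hθ₂' : θ₂ = θ₁ * β := by rw [hβdef]; field_simp
  rw [hθ₂']
  rcases le_or_gt (|b|) β with hc | hc
  · have hmax : max (|b| - β) 0 = 0 := max_eq_right (by linarith)
    rw [hmax]
    simp only [mul_zero, sub_zero, abs_zero]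
    have h1 : b * s ≤ |b| * |s| := (le_abs_self (b * s)).trans_eq (abs_mul b s)
    have h2 : |b| * |s| ≤ β * |s| := mul_le_mul_of_nonneg_right hc (abs_nonneg s)
    nlinarith [sq_nonneg s, abs_nonneg s, mul_le_mul_of_nonneg_left (h1.trans h2) hθ₁.le]
  · have hb : b ≠ 0 := by intro h; rw [h, abs_zero] at hc; linarith
    have hmax : max (|b| - β) 0 = |b| - β := max_eq_left (by linarith)
    rw [hmax]
    rcases lt_or_gt_of_ne hb with hneg | hpos
    · rw [abs_of_neg hneg] at hc
      rw [Real.sign_of_neg hneg, abs_of_neg hneg]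
      have habs : |(-1 : ℝ) * (-b - β)| = -b - β := by
        rw [abs_mul, abs_neg, abs_one, one_mul, abs_of_pos (by linarith)]
      rw [habs]
      nlinarith [mul_nonneg hθ₁.le (sq_nonneg (b - s + β)),
        mul_le_mul_of_nonneg_left (neg_abs_le s) (mul_nonneg hθ₁.le hβ.le)]
    · rw [abs_of_pos hpos] at hc
      rw [Real.sign_of_pos hpos, abs_of_pos hpos]
      have habs : |(1 : ℝ) * (b - β)| = b - β := by
        rw [one_mul, abs_of_pos (by linarith)]
      rw [habs]
      nlinarith [mul_nonneg hθ₁.le (sq_nonneg (b - s - β)),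
        mul_le_mul_of_nonneg_left (le_abs_self s) (mul_nonneg hθ₁.le hβ.le)]

/-- For a finite index set `ι`, `θ₁, θ₂ > 0`, and given `x l : ι → ℝ`, the function
`F(s) = (θ₁/2)·Σᵢ (xᵢ − lᵢ − sᵢ)² + θ₂·Σᵢ |sᵢ|` attains its minimum at the point `s*` given
componentwise by soft thresholding: `s* i = sign(xᵢ − lᵢ)·max(|xᵢ − lᵢ| − θ₂/θ₁, 0)`. -/
theorem soft_threshold_minimizes_separable_objective
    {ι : Type*} [Fintype ι] (θ₁ θ₂ : ℝ) (hθ₁ : 0 < θ₁) (hθ₂ : 0 < θ₂) (x l : ι → ℝ) :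
    let sstar : ι → ℝ := fun i => Real.sign (x i - l i) * max (|x i - l i| - θ₂ / θ₁) 0
    ∀ s : ι → ℝ,
      θ₁ / 2 * ∑ i, (x i - l i - sstar i) ^ 2 + θ₂ * ∑ i, |sstar i| ≤
        θ₁ / 2 * ∑ i, (x i - l i - s i) ^ 2 + θ₂ * ∑ i, |s i| := by
  intro sstar s
  have key : ∀ (f g : ι → ℝ),
      θ₁ / 2 * ∑ i, f i + θ₂ * ∑ i, g i = ∑ i, (θ₁ / 2 * f i + θ₂ * g i) := by
    intro f g
    rw [Finset.mul_sum, Finset.mul_sum, ← Finset.sum_add_distrib]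
  rw [key, key]
  exact Finset.sum_le_sum fun i _ =>
    soft_threshold_scalar θ₁ θ₂ (x i - l i) (s i) hθ₁ hθ₂
end

section
/- Let A be a real m×n matrix with singular value decomposition A = U · D · Vᵀ, where U is an m×m orthogonal matrix, V is an n×n orthogonal matrix, and D is an m×n matrix that is zero off the diagonal with nonnegative diagonal entries σ₁, …, σ_{min(m,n)}. Let τ > 0, and define D_τ as the m×n matrix that is zero off the diagonal with diagonal entries max(σᵢ − τ, 0). Then X* = U · D_τ · Vᵀ is the unique minimizer over real m×n matrices X of the function (1/2)·‖X − A‖_F² + τ·‖X‖_*, where ‖·‖_F is the Frobenius norm. -/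
open Matrix

open Classical in
/-- The positive semidefinite square root of a matrix (junk value `0` if the matrix is not
positive semidefinite). -/
noncomputable def matSqrt {k : ℕ} (P : Matrix (Fin k) (Fin k) ℝ) : Matrix (Fin k) (Fin k) ℝ :=
  if h : P.PosSemidef then
    h.1.eigenvectorUnitary.1 * diagonal ((↑) ∘ (Real.sqrt ·) ∘ h.1.eigenvalues) *
      (star h.1.eigenvectorUnitary : Matrix (Fin k) (Fin k) ℝ) else 0

/-- The nuclear norm of a real `m × n` matrix: `‖X‖₊ = tr((X Xᵀ)^{1/2})`. -/
noncomputable def nuclearNorm {m n : ℕ} (X : Matrix (Fin m) (Fin n) ℝ) : ℝ :=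
  (matSqrt (X * Xᵀ)).trace

/-!- helper lemmas -/

lemma svt_trace_conj {k : ℕ} (W : Matrix (Fin k) (Fin k) ℝ) (hW : Wᵀ * W = 1)
    (B : Matrix (Fin k) (Fin k) ℝ) : (W * B * Wᵀ).trace = B.trace := by
  rw [Matrix.trace_mul_cycle, hW, Matrix.one_mul]

lemma svt_psd_conj {k l : ℕ} (W : Matrix (Fin k) (Fin l) ℝ) (c : Fin l → ℝ)
    (hc : ∀ i, 0 ≤ c i) : (W * Matrix.diagonal c * Wᵀ).PosSemidef := by
  have h := (Matrix.posSemidef_diagonal_iff.mpr hc :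
    (Matrix.diagonal c).PosSemidef).mul_mul_conjTranspose_same W
  simpa [Matrix.conjTranspose_eq_transpose_of_trivial] using h

lemma svt_conj_mul {k : ℕ} (W : Matrix (Fin k) (Fin k) ℝ) (hW : Wᵀ * W = 1)
    (B C : Matrix (Fin k) (Fin k) ℝ) :
    (W * B * Wᵀ) * (W * C * Wᵀ) = W * (B * C) * Wᵀ := by
  calc (W * B * Wᵀ) * (W * C * Wᵀ) = W * (B * ((Wᵀ * W) * (C * Wᵀ))) := by
        simp only [Matrix.mul_assoc]
    _ = W * (B * C) * Wᵀ := by rw [hW, Matrix.one_mul, Matrix.mul_assoc, Matrix.mul_assoc]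

open scoped MatrixOrder in
lemma svt_matSqrt_conj {k : ℕ} (W : Matrix (Fin k) (Fin k) ℝ) (hW : Wᵀ * W = 1)
    (c : Fin k → ℝ) (hc : ∀ i, 0 ≤ c i) :
    matSqrt (W * Matrix.diagonal c * Wᵀ)
      = W * Matrix.diagonal (fun i => Real.sqrt (c i)) * Wᵀ := by
  have hP := svt_psd_conj W c hc
  have hB := svt_psd_conj W (fun i => Real.sqrt (c i)) (fun i => Real.sqrt_nonneg _)
  have hsq : (W * Matrix.diagonal (fun i => Real.sqrt (c i)) * Wᵀ) ^ 2
      = W * Matrix.diagonal c * Wᵀ := by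
    rw [pow_two, svt_conj_mul W hW, Matrix.diagonal_mul_diagonal]
    have h2 : (fun i => Real.sqrt (c i) * Real.sqrt (c i)) = c :=
      funext fun i => Real.mul_self_sqrt (hc i)
    rw [h2]
  have e1 : cfc Real.sqrt (W * Matrix.diagonal c * Wᵀ) = matSqrt (W * Matrix.diagonal c * Wᵀ) := by
    rw [hP.1.cfc_eq, matSqrt, dif_pos hP]; rfl
  rw [← e1, ← cfcₙ_eq_cfc, ← CFC.sqrt_eq_real_sqrt _ (nonneg_iff_posSemidef.mpr hP)]
  rw [← hsq, CFC.sqrt_sq _ (nonneg_iff_posSemidef.mpr hB)]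

lemma svt_sum_mul_eq_trace {m n : ℕ} (M N : Matrix (Fin m) (Fin n) ℝ) :
    ∑ i, ∑ j, M i j * N i j = (Mᵀ * N).trace := by
  rw [Matrix.trace]
  simp only [Matrix.diag, Matrix.mul_apply, Matrix.transpose_apply]
  exact Finset.sum_comm

lemma svt_frob_conj {m n : ℕ} (U : Matrix (Fin m) (Fin m) ℝ) (V : Matrix (Fin n) (Fin n) ℝ)
    (hU : Uᵀ * U = 1) (hV : Vᵀ * V = 1) (B C : Matrix (Fin m) (Fin n) ℝ) :
    ∑ i, ∑ j, (U * B * Vᵀ) i j * (U * C * Vᵀ) i j = ∑ i, ∑ j, B i j * C i j := by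
  rw [svt_sum_mul_eq_trace, svt_sum_mul_eq_trace]
  have h1 : (U * B * Vᵀ)ᵀ * (U * C * Vᵀ) = V * (Bᵀ * C) * Vᵀ := by
    calc (U * B * Vᵀ)ᵀ * (U * C * Vᵀ) = V * (Bᵀ * ((Uᵀ * U) * (C * Vᵀ))) := by
          simp only [Matrix.transpose_mul, Matrix.transpose_transpose, Matrix.mul_assoc]
      _ = V * (Bᵀ * C) * Vᵀ := by rw [hU, Matrix.one_mul, Matrix.mul_assoc, Matrix.mul_assoc]
  rw [h1, svt_trace_conj V hV]

lemma svt_mul_transpose_diag {m n : ℕ} (B C : Matrix (Fin m) (Fin n) ℝ)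
    (hB : ∀ (i : Fin m) (j : Fin n), (i : ℕ) ≠ (j : ℕ) → B i j = 0)
    (hC : ∀ (i : Fin m) (j : Fin n), (i : ℕ) ≠ (j : ℕ) → C i j = 0) :
    B * Cᵀ = Matrix.diagonal (fun i => ∑ j, B i j * C i j) := by
  ext i i'
  by_cases h : i = i'
  · subst h
    simp [Matrix.mul_apply]
  · rw [Matrix.diagonal_apply_ne _ h, Matrix.mul_apply]
    apply Finset.sum_eq_zero
    intro j _
    rw [Matrix.transpose_apply]
    by_cases hij : (i : ℕ) = (j : ℕ)
    · have hij' : (i' : ℕ) ≠ (j : ℕ) := by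
        intro hh
        exact h (Fin.ext (hij.trans hh.symm))
      rw [hC _ _ hij', mul_zero]
    · rw [hB _ _ hij, zero_mul]

lemma svt_diag_sum {m n : ℕ} (f : Fin m → Fin n → ℝ)
    (hf : ∀ (i : Fin m) (j : Fin n), (i : ℕ) ≠ (j : ℕ) → f i j = 0) (i : Fin m) :
    ∑ j, f i j = if h : (i : ℕ) < n then f i ⟨i, h⟩ else 0 := by
  split_ifs with h
  · exact Finset.sum_eq_single _
      (fun j _ hj => hf i j (fun he => hj (Fin.ext he.symm))) (by simp)
  · exact Finset.sum_eq_zero fun j _ => hf i j (by have := j.isLt; omega)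

lemma svt_dual_ineq {m n : ℕ} (G : Matrix (Fin m) (Fin n) ℝ)
    (hPSD : (1 - G * Gᵀ).PosSemidef) (X : Matrix (Fin m) (Fin n) ℝ) :
    ∑ i, ∑ j, G i j * X i j ≤ nuclearNorm X := by
  have hXX : (X * Xᵀ).PosSemidef := by
    have h := Matrix.posSemidef_self_mul_conjTranspose X
    simpa [Matrix.conjTranspose_eq_transpose_of_trivial] using h
  have hH := hXX.1
  set W : Matrix (Fin m) (Fin m) ℝ := (hH.eigenvectorUnitary : Matrix (Fin m) (Fin m) ℝ) with hWdef
  have hWo : Wᵀ * W = 1 := by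
    have h := Matrix.mem_unitaryGroup_iff'.mp hH.eigenvectorUnitary.2
    simpa [Matrix.star_eq_conjTranspose, Matrix.conjTranspose_eq_transpose_of_trivial] using h
  have hWo' : W * Wᵀ = 1 := mul_eq_one_comm.mp hWo
  set lam := hH.eigenvalues with hlamdef
  have hlam : ∀ i, 0 ≤ lam i := hXX.eigenvalues_nonneg
  have hspec : X * Xᵀ = W * Matrix.diagonal lam * Wᵀ := by
    have h := hH.spectral_theorem
    rw [h]
    simp [Matrix.star_eq_conjTranspose, Matrix.conjTranspose_eq_transpose_of_trivial,
      RCLike.ofReal_real_eq_id]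
    rfl
  have hnn : nuclearNorm X = ∑ i, Real.sqrt (lam i) := by
    rw [nuclearNorm, hspec, svt_matSqrt_conj W hWo lam hlam, svt_trace_conj W hWo]
    simp [Matrix.trace, Matrix.diag]
  set N : Matrix (Fin m) (Fin n) ℝ := Wᵀ * X with hNdef
  set M : Matrix (Fin m) (Fin n) ℝ := Wᵀ * G with hMdef
  have hNN : N * Nᵀ = Matrix.diagonal lam := by
    have h1 : N * Nᵀ = Wᵀ * (X * Xᵀ) * W := by
      rw [hNdef, Matrix.transpose_mul, Matrix.transpose_transpose]
      simp only [Matrix.mul_assoc]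
    rw [h1, hspec]
    calc Wᵀ * (W * Matrix.diagonal lam * Wᵀ) * W
        = (Wᵀ * W) * Matrix.diagonal lam * (Wᵀ * W) := by simp only [Matrix.mul_assoc]
      _ = Matrix.diagonal lam := by rw [hWo, Matrix.one_mul, Matrix.mul_one]
  have hrow : ∀ i, ∑ j, N i j * N i j = lam i := by
    intro i
    have h := congrFun (congrFun hNN i) i
    rw [Matrix.mul_apply] at h
    simpa [Matrix.transpose_apply] using h
  have hMM : M * Mᵀ = Wᵀ * (G * Gᵀ) * W := by
    rw [hMdef, Matrix.transpose_mul, Matrix.transpose_transpose]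
    simp only [Matrix.mul_assoc]
  have hpsd2 : (1 - M * Mᵀ).PosSemidef := by
    have h := hPSD.conjTranspose_mul_mul_same W
    have heq : Wᴴ * (1 - G * Gᵀ) * W = 1 - M * Mᵀ := by
      rw [Matrix.conjTranspose_eq_transpose_of_trivial, Matrix.mul_sub, Matrix.sub_mul,
        Matrix.mul_one, hWo, hMM]
    rwa [heq] at h
  have hMrow : ∀ i, ∑ j, M i j * M i j ≤ 1 := by
    intro i
    have h0 := hpsd2.dotProduct_mulVec_nonneg (Pi.single i 1)
    rw [Matrix.sub_mulVec, Matrix.one_mulVec] at h0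
    simp only [star_trivial, dotProduct_sub] at h0
    have h2 : dotProduct (Pi.single i 1 : Fin m → ℝ) (Pi.single i 1) = 1 := by
      simp [dotProduct, Pi.single_apply]
    have h3 : dotProduct (Pi.single i 1 : Fin m → ℝ) ((M * Mᵀ) *ᵥ Pi.single i 1)
        = ∑ j, M i j * M i j := by
      simp [dotProduct, Matrix.mulVec, Pi.single_apply, Matrix.mul_apply]
    rw [h2, h3] at h0
    linarith
  have hkey : ∑ i, ∑ j, G i j * X i j = ∑ i, ∑ j, M i j * N i j := by
    rw [svt_sum_mul_eq_trace, svt_sum_mul_eq_trace]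
    congr 1
    rw [hMdef, hNdef, Matrix.transpose_mul, Matrix.transpose_transpose,
      Matrix.mul_assoc, ← Matrix.mul_assoc W Wᵀ X, hWo', Matrix.one_mul]
  rw [hkey, hnn]
  apply Finset.sum_le_sum
  intro i _
  calc ∑ j, M i j * N i j
      ≤ Real.sqrt (∑ j, M i j ^ 2) * Real.sqrt (∑ j, N i j ^ 2) :=
        Real.sum_mul_le_sqrt_mul_sqrt _ _ _
    _ ≤ 1 * Real.sqrt (lam i) := by
        apply mul_le_mul
        · refine Real.sqrt_le_one.mpr ?_
          simpa [pow_two] using hMrow i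
        · simp only [pow_two]
          rw [hrow i]
        · exact Real.sqrt_nonneg _
        · norm_num
    _ = Real.sqrt (lam i) := one_mul _

/-- singular value thresholding: if `A = U D Vᵀ` is an SVD of `A` (with `U`, `V`
orthogonal and `D` zero off the diagonal with nonnegative diagonal entries) and `τ > 0`, then
`X* = U D_τ Vᵀ`, where `D_τ` shrinks each diagonal entry by `τ` (clipped at 0), is the unique
minimizer of `(1/2)‖X − A‖_F² + τ‖X‖_*`. -/
theorem singular_value_thresholding {m n : ℕ}
    (A : Matrix (Fin m) (Fin n) ℝ) (U : Matrix (Fin m) (Fin m) ℝ)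
    (V : Matrix (Fin n) (Fin n) ℝ) (D : Matrix (Fin m) (Fin n) ℝ)
    (hU : Uᵀ * U = 1) (hV : Vᵀ * V = 1)
    (hD_off : ∀ (i : Fin m) (j : Fin n), (i : ℕ) ≠ (j : ℕ) → D i j = 0)
    (hD_nonneg : ∀ (i : Fin m) (j : Fin n), (i : ℕ) = (j : ℕ) → 0 ≤ D i j)
    (hA : A = U * D * Vᵀ) (τ : ℝ) (hτ : 0 < τ) :
    let Dτ : Matrix (Fin m) (Fin n) ℝ :=
      Matrix.of fun i j => if (i : ℕ) = (j : ℕ) then max (D i j - τ) 0 else 0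
    let Xstar := U * Dτ * Vᵀ
    ∀ X : Matrix (Fin m) (Fin n) ℝ,
      ((1 / 2) * ∑ i, ∑ j, (Xstar i j - A i j) ^ 2 + τ * nuclearNorm Xstar ≤
        (1 / 2) * ∑ i, ∑ j, (X i j - A i j) ^ 2 + τ * nuclearNorm X) ∧
      (X ≠ Xstar →
        (1 / 2) * ∑ i, ∑ j, (Xstar i j - A i j) ^ 2 + τ * nuclearNorm Xstar <
          (1 / 2) * ∑ i, ∑ j, (X i j - A i j) ^ 2 + τ * nuclearNorm X) := by
  intro Dτ Xstar X
  have hDτe : ∀ (i : Fin m) (j : Fin n),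
      Dτ i j = if (i : ℕ) = (j : ℕ) then max (D i j - τ) 0 else 0 := fun i j => rfl
  have hXse : Xstar = U * Dτ * Vᵀ := rfl
  have hτ0 : τ ≠ 0 := ne_of_gt hτ
  have hUU : U * Uᵀ = 1 := mul_eq_one_comm.mp hU
  have hVV : V * Vᵀ = 1 := mul_eq_one_comm.mp hV
  set E : Matrix (Fin m) (Fin n) ℝ :=
    Matrix.of (fun i j => if (i : ℕ) = (j : ℕ) then (D i j - max (D i j - τ) 0) / τ else 0)
    with hEdef
  have hEe : ∀ (i : Fin m) (j : Fin n),
      E i j = if (i : ℕ) = (j : ℕ) then (D i j - max (D i j - τ) 0) / τ else 0 :=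
    fun i j => rfl
  set G : Matrix (Fin m) (Fin n) ℝ := U * E * Vᵀ with hGdef
  have hDτ_off : ∀ (i : Fin m) (j : Fin n), (i : ℕ) ≠ (j : ℕ) → Dτ i j = 0 := by
    intro i j h; rw [hDτe, if_neg h]
  have hE_off : ∀ (i : Fin m) (j : Fin n), (i : ℕ) ≠ (j : ℕ) → E i j = 0 := by
    intro i j h; rw [hEe, if_neg h]
  have hDτ_nonneg : ∀ (i : Fin m) (j : Fin n), 0 ≤ Dτ i j := by
    intro i j; rw [hDτe]; split_ifs
    · exact le_max_right _ _
    · exact le_rfl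
  have hE01 : ∀ (i : Fin m) (j : Fin n), 0 ≤ E i j ∧ E i j ≤ 1 := by
    intro i j; rw [hEe]; split_ifs with h
    · have hσ := hD_nonneg i j h
      rcases le_or_gt τ (D i j) with hc | hc
      · have h1 : max (D i j - τ) 0 = D i j - τ := max_eq_left (by linarith)
        rw [h1]
        have h2 : D i j - (D i j - τ) = τ := by ring
        rw [h2, div_self hτ0]
        norm_num
      · have h1 : max (D i j - τ) 0 = 0 := max_eq_right (by linarith)
        rw [h1, sub_zero]
        constructor
        · positivity
        · rw [div_le_one hτ]; linarith
    · norm_num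
  -- Xstar - A = -(τ • G) entrywise
  have hXA : ∀ (i : Fin m) (j : Fin n), Xstar i j - A i j = -(τ * G i j) := by
    have hmat : Xstar - A = -(τ • G) := by
      have hDE : Dτ - D = -(τ • E) := by
        ext i j
        simp only [Matrix.sub_apply, Matrix.neg_apply, Matrix.smul_apply, smul_eq_mul]
        rw [hDτe, hEe]
        split_ifs with h
        · field_simp
          ring
        · simp [hD_off i j h]
      calc Xstar - A = U * (Dτ - D) * Vᵀ := by
            rw [hXse, hA, Matrix.mul_sub, Matrix.sub_mul]
        _ = -(τ • G) := by
            rw [hDE, hGdef]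
            rw [Matrix.mul_neg, Matrix.neg_mul, Matrix.mul_smul, Matrix.smul_mul]
    intro i j
    have h := congrFun (congrFun hmat i) j
    simpa using h
  -- dual certificate is a contraction
  have hGG : G * Gᵀ = U * (E * Eᵀ) * Uᵀ := by
    rw [hGdef]
    calc (U * E * Vᵀ) * (U * E * Vᵀ)ᵀ = U * (E * ((Vᵀ * V) * (Eᵀ * Uᵀ))) := by
          simp only [Matrix.transpose_mul, Matrix.transpose_transpose, Matrix.mul_assoc]
      _ = U * (E * Eᵀ) * Uᵀ := by
          rw [hV, Matrix.one_mul]; simp only [Matrix.mul_assoc]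
  have hEE : E * Eᵀ = Matrix.diagonal (fun i => ∑ j, E i j * E i j) :=
    svt_mul_transpose_diag E E hE_off hE_off
  have hcE1 : ∀ i : Fin m, ∑ j, E i j * E i j ≤ 1 := by
    intro i
    rw [svt_diag_sum (fun i j => E i j * E i j)
      (fun i j h => by show E i j * E i j = 0; rw [hE_off i j h, zero_mul]) i]
    split_ifs with h
    · exact mul_le_one₀ (hE01 i ⟨i, h⟩).2 (hE01 i ⟨i, h⟩).1 (hE01 i ⟨i, h⟩).2
    · norm_num
  have hPSD1 : ((1 : Matrix (Fin m) (Fin m) ℝ) - G * Gᵀ).PosSemidef := by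
    have h1 : (1 : Matrix (Fin m) (Fin m) ℝ) - G * Gᵀ
        = U * Matrix.diagonal (fun i => 1 - ∑ j, E i j * E i j) * Uᵀ := by
      rw [hGG, hEE]
      have h2 : Matrix.diagonal (fun i : Fin m => 1 - ∑ j, E i j * E i j)
          = 1 - Matrix.diagonal (fun i : Fin m => ∑ j, E i j * E i j) := by
        rw [← Matrix.diagonal_one, Matrix.diagonal_sub]
      rw [h2, Matrix.mul_sub, Matrix.sub_mul, Matrix.mul_one, hUU]
    rw [h1]
    exact svt_psd_conj U _ (fun i => by linarith [hcE1 i])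
  have hdual : ∑ i, ∑ j, G i j * X i j ≤ nuclearNorm X := svt_dual_ineq G hPSD1 X
  -- nuclear norm of Xstar and the equality ⟨G, Xstar⟩ = ‖Xstar‖_*
  have hcD : ∀ i : Fin m, 0 ≤ ∑ j, Dτ i j * Dτ i j :=
    fun i => Finset.sum_nonneg fun j _ => mul_self_nonneg _
  have hXsXs : Xstar * Xstarᵀ
      = U * Matrix.diagonal (fun i => ∑ j, Dτ i j * Dτ i j) * Uᵀ := by
    rw [hXse]
    calc (U * Dτ * Vᵀ) * (U * Dτ * Vᵀ)ᵀ = U * (Dτ * ((Vᵀ * V) * (Dτᵀ * Uᵀ))) := by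
          simp only [Matrix.transpose_mul, Matrix.transpose_transpose, Matrix.mul_assoc]
      _ = U * (Dτ * Dτᵀ) * Uᵀ := by
          rw [hV, Matrix.one_mul]; simp only [Matrix.mul_assoc]
      _ = U * Matrix.diagonal (fun i => ∑ j, Dτ i j * Dτ i j) * Uᵀ := by
          rw [svt_mul_transpose_diag Dτ Dτ hDτ_off hDτ_off]
  have hnnXs : nuclearNorm Xstar = ∑ i, Real.sqrt (∑ j, Dτ i j * Dτ i j) := by
    rw [nuclearNorm, hXsXs, svt_matSqrt_conj U hU _ hcD, svt_trace_conj U hU]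
    simp [Matrix.trace, Matrix.diag]
  have hGXs : ∑ i, ∑ j, G i j * Xstar i j = nuclearNorm Xstar := by
    rw [hGdef, hXse, svt_frob_conj U V hU hV E Dτ, hnnXs]
    apply Finset.sum_congr rfl
    intro i _
    rw [svt_diag_sum (fun i j => E i j * Dτ i j)
      (fun i j h => by show E i j * Dτ i j = 0; rw [hE_off i j h, zero_mul]) i]
    rw [svt_diag_sum (fun i j => Dτ i j * Dτ i j)
      (fun i j h => by show Dτ i j * Dτ i j = 0; rw [hDτ_off i j h, zero_mul]) i]
    split_ifs with h
    · have hd : Dτ i ⟨i, h⟩ = max (D i ⟨i, h⟩ - τ) 0 := by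
        rw [hDτe, if_pos rfl]
      have he : E i ⟨i, h⟩ = (D i ⟨i, h⟩ - max (D i ⟨i, h⟩ - τ) 0) / τ := by
        rw [hEe, if_pos rfl]
      rw [Real.sqrt_mul_self (hDτ_nonneg i ⟨i, h⟩)]
      rcases le_or_gt τ (D i ⟨i, h⟩) with hc | hc
      · have h1 : max (D i ⟨i, h⟩ - τ) 0 = D i ⟨i, h⟩ - τ := max_eq_left (by linarith)
        rw [he, h1]
        have h2 : D i ⟨i, h⟩ - (D i ⟨i, h⟩ - τ) = τ := by ring
        rw [h2, div_self hτ0, one_mul]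
      · have h1 : max (D i ⟨i, h⟩ - τ) 0 = 0 := max_eq_right (by linarith)
        rw [hd, h1, mul_zero]
    · rw [Real.sqrt_zero]
  -- quadratic expansion
  have hpt : ∀ (i : Fin m) (j : Fin n), (X i j - A i j) ^ 2
      = (X i j - Xstar i j) ^ 2 + (Xstar i j - A i j) ^ 2
        + (2 * τ) * (G i j * Xstar i j) - (2 * τ) * (G i j * X i j) := by
    intro i j
    linear_combination (2 * (X i j - Xstar i j)) * (hXA i j)
  have hsum : ∑ i, ∑ j, (X i j - A i j) ^ 2
      = ∑ i, ∑ j, (X i j - Xstar i j) ^ 2 + ∑ i, ∑ j, (Xstar i j - A i j) ^ 2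
        + (2 * τ) * (∑ i, ∑ j, G i j * Xstar i j)
        - (2 * τ) * (∑ i, ∑ j, G i j * X i j) := by
    have h1 : ∑ i, ∑ j, (X i j - A i j) ^ 2
        = ∑ i, ∑ j, ((X i j - Xstar i j) ^ 2 + (Xstar i j - A i j) ^ 2
          + (2 * τ) * (G i j * Xstar i j) - (2 * τ) * (G i j * X i j)) :=
      Finset.sum_congr rfl fun i _ => Finset.sum_congr rfl fun j _ => hpt i j
    rw [h1]
    simp only [Finset.sum_add_distrib, Finset.sum_sub_distrib, ← Finset.mul_sum]
  have hS0 : 0 ≤ ∑ i, ∑ j, (X i j - Xstar i j) ^ 2 :=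
    Finset.sum_nonneg fun i _ => Finset.sum_nonneg fun j _ => sq_nonneg _
  have he2 : (2 * τ) * (∑ i, ∑ j, G i j * X i j) = 2 * (τ * (∑ i, ∑ j, G i j * X i j)) := by
    ring
  have he3 : (2 * τ) * (∑ i, ∑ j, G i j * Xstar i j) = 2 * (τ * nuclearNorm Xstar) := by
    rw [hGXs]; ring
  have he4 : τ * (∑ i, ∑ j, G i j * X i j) ≤ τ * nuclearNorm X :=
    mul_le_mul_of_nonneg_left hdual hτ.le
  constructor
  · linarith [hsum, hS0, he2, he3, he4]
  · intro hne
    have hpos : 0 < ∑ i, ∑ j, (X i j - Xstar i j) ^ 2 := by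
      obtain ⟨i, j, hij⟩ : ∃ i j, X i j ≠ Xstar i j := by
        by_contra hc
        push_neg at hc
        exact hne (by ext i j; exact hc i j)
      have hterm : 0 < (X i j - Xstar i j) ^ 2 :=
        sq_pos_of_ne_zero (sub_ne_zero.mpr hij)
      calc (0 : ℝ) < ∑ j', (X i j' - Xstar i j') ^ 2 :=
            Finset.sum_pos' (fun _ _ => sq_nonneg _) ⟨j, Finset.mem_univ j, hterm⟩
        _ ≤ ∑ i', ∑ j', (X i' j' - Xstar i' j') ^ 2 :=
            Finset.single_le_sum
              (f := fun i' => ∑ j', (X i' j' - Xstar i' j') ^ 2)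
              (fun i' _ => Finset.sum_nonneg fun _ _ => sq_nonneg _) (Finset.mem_univ i)
    linarith [hsum, he2, he3, he4]
end
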